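/- The negativity of a pure state in Schmidt form is N(|ψ⟩⟨ψ|) = ∑_{i<j} λ_iλ_j = ((∑_j λ_j)² − 1)/2, where |ψ⟩ = ∑_j λ_j |j⟩⊗|j⟩ with λ_j ≥ 0 and ∑_j λ_j² = 1. -/

import Mathlib

open Matrix Kronecker ComplexOrder BigOperators Finset

noncomputable section

def ptranspose {m n : Type*} (X : Matrix (m × n) (m × n) ℂ) : Matrix (m × n) (m × n) ℂ :=
  Matrix.of fun p q => X (q.1, p.2) (p.1, q.2)

def traceNorm {d : Type*} [Fintype d] [DecidableEq d] (A : Matrix d d ℂ) : ℝ :=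
  (((Matrix.posSemidef_conjTranspose_mul_self A).1.eigenvectorUnitary : Matrix d d ℂ) *
    diagonal (((↑) : ℝ → ℂ) ∘ (√·) ∘ (Matrix.posSemidef_conjTranspose_mul_self A).1.eigenvalues) *
    (star (Matrix.posSemidef_conjTranspose_mul_self A).1.eigenvectorUnitary : Matrix d d ℂ)).trace.re

def proj {ι : Type*} (v : ι → ℂ) : Matrix ι ι ℂ := Matrix.vecMulVec v (star v)

def schmidtVec {d : ℕ} (l : Fin d → ℝ) : Fin d × Fin d → ℂ :=
  fun p => if p.1 = p.2 then (l p.1 : ℂ) else 0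

/-! The partial transpose of `|ψ⟩⟨ψ|` has the entry `λᵢλⱼ` at `((i, j), (j, i))` and zeros elsewhere:
it is `D = diag(λᵢλⱼ)` followed by the swap of the tensor factors. Hence `Aᴴ A = D²` with `D ≥ 0`,
so `‖A‖₁ = tr D = (∑ λⱼ)²`, and expanding the square with `∑ λⱼ² = 1` gives both formulas. -/

theorem Fintype.sq_sum_eq_sum_sq_add_two_mul_sum_lt {ι R : Type*} [Fintype ι] [LinearOrder ι]
    [CommSemiring R] (f : ι → R) :
    (∑ i, f i) ^ 2
      = ∑ i, f i ^ 2 + 2 * ∑ q ∈ univ.filter (fun q : ι × ι => q.1 < q.2), f q.1 * f q.2 := by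
  have hsplit : ∀ q : ι × ι, f q.1 * f q.2
      = (if q.1 < q.2 then f q.1 * f q.2 else 0) + (if q.1 = q.2 then f q.1 * f q.2 else 0)
        + (if q.2 < q.1 then f q.1 * f q.2 else 0) := by
    intro q
    rcases lt_trichotomy q.1 q.2 with h | h | h
    · simp [h, h.ne, h.not_gt]
    · simp [h]
    · simp [h, h.ne', h.not_gt]
  have hdiag : ∑ q : ι × ι, (if q.1 = q.2 then f q.1 * f q.2 else 0) = ∑ i, f i ^ 2 := by
    simp [Fintype.sum_prod_type, sq]
  have hswap : ∑ q : ι × ι, (if q.2 < q.1 then f q.1 * f q.2 else 0)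
      = ∑ q : ι × ι, (if q.1 < q.2 then f q.1 * f q.2 else 0) :=
    Fintype.sum_equiv (Equiv.prodComm ι ι) _ _ fun q => by simp [mul_comm]
  calc (∑ i, f i) ^ 2 = ∑ q : ι × ι, f q.1 * f q.2 := by
        rw [sq, Fintype.sum_mul_sum, Fintype.sum_prod_type]
    _ = _ := by
        rw [Finset.sum_congr rfl fun q _ => hsplit q, sum_add_distrib, sum_add_distrib, hdiag,
          hswap, ← sum_filter]
        ring

section MatrixOrder

open scoped MatrixOrder

theorem traceNorm_eq_re_trace_sqrt {ι : Type*} [Fintype ι] [DecidableEq ι] (A : Matrix ι ι ℂ) :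
    traceNorm A = (CFC.sqrt (Aᴴ * A)).trace.re := by
  have hAA := posSemidef_conjTranspose_mul_self A
  rw [CFC.sqrt_eq_cfc, cfc_nnreal_eq_real _ _ (nonneg_iff_posSemidef.mpr hAA), hAA.1.cfc_eq,
    IsHermitian.cfc, Unitary.conjStarAlgAut_apply, traceNorm]
  simp only [Real.sqrt]
  rfl

theorem traceNorm_eq_re_trace_of_conjTranspose_mul_self_eq_sq {ι : Type*} [Fintype ι]
    [DecidableEq ι] {A P : Matrix ι ι ℂ} (hP : P.PosSemidef) (h : Aᴴ * A = P ^ 2) :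
    traceNorm A = P.trace.re := by
  rw [traceNorm_eq_re_trace_sqrt, h, CFC.sqrt_sq P (nonneg_iff_posSemidef.mpr hP)]

end MatrixOrder

theorem ptranspose_proj_schmidtVec {d : ℕ} (l : Fin d → ℝ) :
    ptranspose (proj (schmidtVec l))
      = of fun p q => if q = p.swap then ((l p.1 * l p.2 : ℝ) : ℂ) else 0 := by
  ext p q
  rcases p with ⟨i, j⟩
  rcases q with ⟨k, m⟩
  simp only [ptranspose, proj, schmidtVec, vecMulVec, of_apply, Pi.star_apply, Prod.swap,
    Prod.ext_iff]
  split_ifs <;> simp_all [mul_comm]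

theorem conjTranspose_mul_self_ptranspose_proj_schmidtVec {d : ℕ} (l : Fin d → ℝ) :
    (ptranspose (proj (schmidtVec l)))ᴴ * ptranspose (proj (schmidtVec l))
      = diagonal (fun p : Fin d × Fin d => ((l p.1 * l p.2 : ℝ) : ℂ)) ^ 2 := by
  ext p q
  rw [ptranspose_proj_schmidtVec, diagonal_pow, mul_apply, Fintype.sum_eq_single p.swap]
  · by_cases hpq : p = q <;> simp [hpq, sq, mul_comm, eq_comm]
  · intro r hr
    have hpr : p ≠ r.swap := fun h => hr (by simp [h])
    simp [hpr]

theorem re_trace_diagonal_mul_eq_sq_sum {d : ℕ} (l : Fin d → ℝ) :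
    (diagonal (fun p : Fin d × Fin d => ((l p.1 * l p.2 : ℝ) : ℂ))).trace.re = (∑ j, l j) ^ 2 := by
  simp [trace_diagonal, Complex.re_sum, Fintype.sum_prod_type, sq, Fintype.sum_mul_sum]

/-- The negativity of a pure state in Schmidt form:
`N(|ψ⟩⟨ψ|) = ∑_{i<j} λ_iλ_j = ((∑_j λ_j)² − 1)/2`. -/
theorem negativity_pure_schmidt {d : ℕ} (l : Fin d → ℝ)
    (hl : ∀ j, 0 ≤ l j) (hnorm : ∑ j, (l j) ^ 2 = 1) :
    (traceNorm (ptranspose (proj (schmidtVec l))) - 1) / 2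
        = ∑ q ∈ Finset.univ.filter (fun q : Fin d × Fin d => q.1 < q.2), l q.1 * l q.2 ∧
    (traceNorm (ptranspose (proj (schmidtVec l))) - 1) / 2
        = ((∑ j, l j) ^ 2 - 1) / 2 := by
  have hD : (diagonal fun p : Fin d × Fin d => ((l p.1 * l p.2 : ℝ) : ℂ)).PosSemidef :=
    posSemidef_diagonal_iff.mpr fun p => Complex.zero_le_real.mpr (mul_nonneg (hl _) (hl _))
  have htrace : traceNorm (ptranspose (proj (schmidtVec l))) = (∑ j, l j) ^ 2 := by
    rw [traceNorm_eq_re_trace_of_conjTranspose_mul_self_eq_sq hD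
      (conjTranspose_mul_self_ptranspose_proj_schmidtVec l), re_trace_diagonal_mul_eq_sq_sum]
  rw [htrace, Fintype.sq_sum_eq_sum_sq_add_two_mul_sum_lt, hnorm]
  constructor <;> ring
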